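/- arXiv:1705.09385 — 2 statements merged into one kernel-verified Lean document; each statement's English description precedes it below -/
import Mathlib

section
/- If H_1 and H_2 are both shortest path graphs, then their disjoint union H_1 ∪ H_2 is a shortest path graph. -/
open SimpleGraph

/-- The type of `a,b`-geodesics in `G`: paths from `a` to `b` of length `d_G(a,b)`. -/
def Geodesic {V : Type*} (G : SimpleGraph V) (a b : V) : Type _ :=
  {p : G.Walk a b // p.IsPath ∧ p.length = G.dist a b}

/-- Two geodesics differ at exactly the index `i` (comparing vertex sequences). -/
def DiffAt {V : Type*} {G : SimpleGraph V} {a b : V} (U W : Geodesic G a b) (i : ℕ) : Prop :=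
  U.1.support.getD i a ≠ W.1.support.getD i a ∧
    ∀ j, j ≠ i → U.1.support.getD j a = W.1.support.getD j a

/-- The shortest path graph `S(G,a,b)`: vertices are `a,b`-geodesics, adjacent iff their
vertex sequences differ in exactly one position. -/
def SPG {V : Type*} (G : SimpleGraph V) (a b : V) : SimpleGraph (Geodesic G a b) where
  Adj U W := ∃ i, DiffAt U W i
  symm := by
    constructor
    rintro U W ⟨i, hne, hj⟩
    exact ⟨i, hne.symm, fun j hji => (hj j hji).symm⟩
  loopless := by
    constructor
    rintro U ⟨i, hne, -⟩
    exact hne rfl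

/-- A graph is a shortest path graph if it is isomorphic to `S(G,a,b)` for some `G`, `a ≠ b`. -/
def IsSPGraph {α : Type*} (H : SimpleGraph α) : Prop :=
  ∃ (V : Type) (G : SimpleGraph V) (a b : V), a ≠ b ∧ Nonempty (H ≃g SPG G a b)

/-!
Put finitely many graphs `G k` in parallel between two new terminals `src` and `snk`, laid out
in layers: an `a k, b k`-geodesic `v₀, …, v_d` of `G k` becomes the walk
`src, (v₀, 1), …, (v_d, d + 1), (b k, d + 2), …, (b k, n - 1), snk`, where `n` exceeds every
`d(a k, b k)` by at least 2. Every edge joins consecutive layers, so `src, snk`-walks have length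
at least `n`, and one of length exactly `n` climbs one layer per step; reading off its vertices
recovers a geodesic of a single `G k`. Lifting shifts positions by one, so it preserves adjacency
within a side, whereas lifts from different sides differ in layers 1 and 2 (take `n ≥ 3`) and are
never adjacent. Hence the shortest path graph of the composite is the disjoint union of the
`S(G k, a k, b k)`.
-/

namespace SimpleGraph

namespace Walk

variable {V : Type*} {G : SimpleGraph V}

def ofSeq : (f : ℕ → V) → (m : ℕ) → (∀ j < m, G.Adj (f j) (f (j + 1))) →
    G.Walk (f 0) (f m)
  | _, 0, _ => nil
  | f, m + 1, h =>
    cons (h 0 m.succ_pos) (ofSeq (fun j => f (j + 1)) m fun j hj => h (j + 1) (by omega))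

@[simp]
lemma length_ofSeq (f : ℕ → V) (m : ℕ) (h : ∀ j < m, G.Adj (f j) (f (j + 1))) :
    (ofSeq f m h).length = m := by
  induction m generalizing f with
  | zero => rfl
  | succ m ih => simp [ofSeq, ih]

@[simp]
lemma getVert_ofSeq (f : ℕ → V) (m : ℕ) (h : ∀ j < m, G.Adj (f j) (f (j + 1))) (j : ℕ) :
    (ofSeq f m h).getVert j = f (min j m) := by
  induction m generalizing f j with
  | zero => simp [ofSeq]
  | succ m ih =>
    cases j with
    | zero => rfl
    | succ j => simp [ofSeq, getVert_cons_succ, ih, Nat.succ_min_succ]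

end Walk

variable {ι : Type*} {W : ι → Type*}

inductive SigmaAdj (H : ∀ k, SimpleGraph (W k)) : (Σ k, W k) → (Σ k, W k) → Prop
  | mk {k : ι} {x y : W k} : (H k).Adj x y → SigmaAdj H ⟨k, x⟩ ⟨k, y⟩

protected def sigma (H : ∀ k, SimpleGraph (W k)) : SimpleGraph (Σ k, W k) where
  Adj := SigmaAdj H
  symm := ⟨fun _ _ h => by cases h with | mk h => exact .mk h.symm⟩
  loopless := ⟨fun _ h => by cases h with | mk h => exact h.ne rfl⟩

variable {H : ∀ k, SimpleGraph (W k)}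

@[simp]
lemma sigma_adj_mk {k : ι} {x y : W k} :
    (SimpleGraph.sigma H).Adj ⟨k, x⟩ ⟨k, y⟩ ↔ (H k).Adj x y :=
  ⟨fun h => by change SigmaAdj H _ _ at h; cases h with | mk h => exact h, SigmaAdj.mk⟩

lemma sigma_not_adj_of_ne {k k' : ι} (hk : k ≠ k') (x : W k) (y : W k') :
    ¬(SimpleGraph.sigma H).Adj ⟨k, x⟩ ⟨k', y⟩ := by
  rintro (⟨-⟩ : SigmaAdj H _ _)
  exact hk rfl

def Iso.sumSigmaBool {W : Bool → Type*} (H : ∀ k, SimpleGraph (W k)) :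
    H false ⊕g H true ≃g SimpleGraph.sigma H where
  toFun := Sum.elim (Sigma.mk false) (Sigma.mk true)
  invFun
    | ⟨false, x⟩ => .inl x
    | ⟨true, y⟩ => .inr y
  left_inv := by rintro (x | y) <;> rfl
  right_inv := by rintro ⟨_ | _, x⟩ <;> rfl
  map_rel_iff' := by
    rintro (x | y) (x' | y') <;> simp [sigma_not_adj_of_ne]

end SimpleGraph

namespace Geodesic

variable {V : Type*} {G : SimpleGraph V} {a b : V}

lemma length_eq (U : Geodesic G a b) : U.1.length = G.dist a b := U.2.2

@[ext]
lemma ext {U W : Geodesic G a b} (h : ∀ j, U.1.getVert j = W.1.getVert j) : U = W :=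
  Subtype.ext (Walk.ext_getVert h)

def ofLengthEqDist (p : G.Walk a b) (hp : p.length = G.dist a b) : Geodesic G a b :=
  ⟨p, p.isPath_of_length_eq_dist hp, hp⟩

lemma getD_support_eq_iff (U W : Geodesic G a b) (j : ℕ) :
    U.1.support.getD j a = W.1.support.getD j a ↔ U.1.getVert j = W.1.getVert j := by
  by_cases hj : j ≤ G.dist a b
  · rw [U.1.getVert_eq_support_getElem (by rw [U.length_eq]; exact hj),
      W.1.getVert_eq_support_getElem (by rw [W.length_eq]; exact hj),
      List.getD_eq_getElem, List.getD_eq_getElem]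
  · rw [U.1.getVert_of_length_le (by rw [U.length_eq]; omega),
      W.1.getVert_of_length_le (by rw [W.length_eq]; omega),
      List.getD_eq_default _ _ (by simp [U.length_eq]; omega),
      List.getD_eq_default _ _ (by simp [W.length_eq]; omega)]
    exact iff_of_true rfl rfl

end Geodesic

lemma spg_adj_iff_getVert {V : Type*} {G : SimpleGraph V} {a b : V} {U W : Geodesic G a b} :
    (SPG G a b).Adj U W ↔
      ∃ i, U.1.getVert i ≠ W.1.getVert i ∧
        ∀ j, j ≠ i → U.1.getVert j = W.1.getVert j := by
  simp only [SPG, DiffAt, ne_eq, Geodesic.getD_support_eq_iff]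

lemma IsSPGraph.of_iso {α β : Type*} {H : SimpleGraph α} {H' : SimpleGraph β}
    (h : IsSPGraph H') (e : H ≃g H') : IsSPGraph H :=
  let ⟨V, G, a, b, hab, ⟨e'⟩⟩ := h
  ⟨V, G, a, b, hab, ⟨e.trans e'⟩⟩

namespace Parallel

universe u v

inductive Vert {ι : Type u} (V : ι → Type v) : Type (max u v)
  | src
  | snk
  | mid (k : ι) (x : V k) (i : ℕ)

variable {ι : Type u} {V : ι → Type v}

def Vert.level (n : ℕ) : Vert V → ℕ
  | .src => 0
  | .snk => n
  | .mid _ _ i => i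

section Construction

variable (G : ∀ k, SimpleGraph (V k)) (a b : ∀ k, V k) (n : ℕ)

inductive Step : Vert V → Vert V → Prop
  | start (k : ι) : Step .src (.mid k (a k) 1)
  | edge {k : ι} {x y : V k} {i : ℕ} :
      i ≤ (G k).dist (a k) (b k) → (G k).Adj x y → Step (.mid k x i) (.mid k y (i + 1))
  | pad {k : ι} {i : ℕ} :
      (G k).dist (a k) (b k) < i → Step (.mid k (b k) i) (.mid k (b k) (i + 1))
  | finish {k : ι} {i : ℕ} : i + 1 = n → Step (.mid k (b k) i) .snk

def graph : SimpleGraph (Vert V) := SimpleGraph.fromRel (Step G a b n)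

end Construction

variable {G : ∀ k, SimpleGraph (V k)} {a b : ∀ k, V k} {n : ℕ}

lemma Step.level_eq {x y : Vert V} (h : Step G a b n x y) : y.level n = x.level n + 1 := by
  cases h <;> simp [Vert.level, *]

lemma Step.adj {x y : Vert V} (h : Step G a b n x y) : (graph G a b n).Adj x y :=
  ⟨fun hxy => by simpa [hxy] using h.level_eq, .inl h⟩

lemma Step.eq_mid_or_eq_snk {k : ι} {x : V k} {i : ℕ} {y : Vert V}
    (h : Step G a b n (.mid k x i) y) : (∃ z, y = .mid k z (i + 1)) ∨ y = .snk := by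
  cases h with
  | edge => exact .inl ⟨_, rfl⟩
  | pad => exact .inl ⟨_, rfl⟩
  | finish => exact .inr rfl

lemma Step.exists_eq_start {y : Vert V} (h : Step G a b n .src y) :
    ∃ k, y = .mid k (a k) 1 := by
  cases h with
  | start k => exact ⟨k, rfl⟩

lemma Step.eq_start {k : ι} {x : V k} (h : Step G a b n .src (.mid k x 1)) : x = a k := by
  cases h; rfl

lemma Step.adj_or_pad {k : ι} {x y : V k} {i : ℕ}
    (h : Step G a b n (.mid k x i) (.mid k y (i + 1))) :
    (i ≤ (G k).dist (a k) (b k) ∧ (G k).Adj x y) ∨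
      ((G k).dist (a k) (b k) < i ∧ x = b k ∧ y = b k) := by
  cases h with
  | edge hi hxy => exact .inl ⟨hi, hxy⟩
  | pad hi => exact .inr ⟨hi, rfl, rfl⟩

lemma Step.eq_finish {k : ι} {x : V k} {i : ℕ} (h : Step G a b n (.mid k x i) .snk) :
    x = b k := by
  cases h; rfl

lemma level_le_add_length {x y : Vert V} (W : (graph G a b n).Walk x y) :
    y.level n ≤ x.level n + W.length := by
  induction W with
  | nil => simp
  | cons h W ih =>
    rcases h.2 with h | h <;> have := h.level_eq <;> simp only [Walk.length_cons] <;> omega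

lemma step_getVert_of_level_eq {x y : Vert V} (W : (graph G a b n).Walk x y)
    (hW : y.level n = x.level n + W.length) {j : ℕ} (hj : j < W.length) :
    Step G a b n (W.getVert j) (W.getVert (j + 1)) := by
  induction W generalizing j with
  | nil => simp at hj
  | cons h W ih =>
    have hle := level_le_add_length W
    simp only [Walk.length_cons] at hW hj
    have hstep := h.2.resolve_right fun h' => by have := h'.level_eq; omega
    have := hstep.level_eq
    cases j with
    | zero => simpa using hstep
    | succ j => exact ih (by omega) (by omega)

variable (G a) in
def Vert.Reached : Vert V → Prop
  | .src => True
  | .snk => False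
  | .mid k x _ => (G k).Reachable (a k) x

lemma exists_reachable_of_reachable (h : (graph G a b n).Reachable .src .snk) :
    ∃ k, (G k).Reachable (a k) (b k) := by
  by_contra! hG
  have hstep : ∀ x y, Step G a b n x y → (x.Reached G a ↔ y.Reached G a) := by
    intro x y hxy
    cases hxy with
    | start => exact iff_of_true trivial (Reachable.refl _)
    | edge _ hxy => exact ⟨fun h => h.trans hxy.reachable, fun h => h.trans hxy.symm.reachable⟩
    | pad => exact Iff.rfl
    | finish => exact iff_of_false (hG _) id
  obtain ⟨W⟩ := h
  suffices ∀ {x y} (W : (graph G a b n).Walk x y), x.Reached G a → y.Reached G a from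
    this W trivial
  intro x y W
  induction W with
  | nil => exact id
  | cons h _ ih =>
    rcases h.2 with h | h
    · exact ih ∘ (hstep _ _ h).1
    · exact ih ∘ (hstep _ _ h).2

-- Beyond the length of `p`, `getVert` stays at its endpoint: this supplies the padding by `b k`.
variable (n) in
def liftVert (k : ι) {H : SimpleGraph (V k)} {x y : V k} (p : H.Walk x y) (j : ℕ) : Vert V :=
  if j = 0 then .src else if j < n then .mid k (p.getVert (j - 1)) j else .snk

section LiftVert

variable {k : ι} {H : SimpleGraph (V k)} {x y : V k} (p : H.Walk x y)

@[simp] lemma liftVert_zero : liftVert n k p 0 = .src := rfl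

lemma liftVert_succ_of_lt {j : ℕ} (hj : j + 1 < n) :
    liftVert n k p (j + 1) = .mid k (p.getVert j) (j + 1) := by
  simp [liftVert, hj]

lemma liftVert_of_le {j : ℕ} (h0 : j ≠ 0) (hj : n ≤ j) : liftVert n k p j = .snk := by
  simp [liftVert, h0, Nat.not_lt.2 hj]

end LiftVert

lemma step_liftVert {k : ι} (p : (G k).Walk (a k) (b k))
    (hp : p.length = (G k).dist (a k) (b k)) (hn : (G k).dist (a k) (b k) + 2 ≤ n) {j : ℕ}
    (hj : j < n) :
    Step G a b n (liftVert n k p j) (liftVert n k p (j + 1)) := by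
  cases j with
  | zero =>
    rw [liftVert_zero, liftVert_succ_of_lt p (by omega), Walk.getVert_zero]
    exact .start k
  | succ j =>
    rw [liftVert_succ_of_lt p hj]
    by_cases hlast : j + 2 < n
    · rw [liftVert_succ_of_lt p hlast]
      by_cases hjp : j < p.length
      · exact .edge (by omega) (p.adj_getVert_succ hjp)
      · rw [p.getVert_of_length_le (by omega), p.getVert_of_length_le (by omega)]
        exact .pad (by omega)
    · rw [liftVert_of_le p (by omega) (by omega), p.getVert_of_length_le (by omega)]
      exact .finish (by omega)

def liftWalk {k : ι} (p : (G k).Walk (a k) (b k))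
    (hp : p.length = (G k).dist (a k) (b k)) (hn : (G k).dist (a k) (b k) + 2 ≤ n) :
    (graph G a b n).Walk .src .snk :=
  (Walk.ofSeq (liftVert n k p) n fun _ hj => (step_liftVert p hp hn hj).adj).copy
    (liftVert_zero p) (liftVert_of_le p (by omega) le_rfl)

@[simp]
lemma length_liftWalk {k : ι} (p : (G k).Walk (a k) (b k))
    (hp : p.length = (G k).dist (a k) (b k)) (hn : (G k).dist (a k) (b k) + 2 ≤ n) :
    (liftWalk p hp hn).length = n := by
  rw [liftWalk, Walk.length_copy, Walk.length_ofSeq]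

@[simp]
lemma getVert_liftWalk {k : ι} (p : (G k).Walk (a k) (b k))
    (hp : p.length = (G k).dist (a k) (b k)) (hn : (G k).dist (a k) (b k) + 2 ≤ n) (j : ℕ) :
    (liftWalk p hp hn).getVert j = liftVert n k p j := by
  simp only [liftWalk, Walk.getVert_copy, Walk.getVert_ofSeq]
  rcases le_total j n with hj | hj
  · rw [min_eq_left hj]
  · rw [min_eq_right hj, liftVert_of_le p (by omega) le_rfl, liftVert_of_le p (by omega) hj]

lemma dist_src_snk (hn : ∀ k, (G k).dist (a k) (b k) + 2 ≤ n)
    (h : (graph G a b n).Reachable .src .snk) : (graph G a b n).dist .src .snk = n := by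
  obtain ⟨k, hk⟩ := exists_reachable_of_reachable h
  obtain ⟨p, hp⟩ := hk.exists_walk_length_eq_dist
  obtain ⟨W, hW⟩ := h.exists_walk_length_eq_dist
  have hlow := level_le_add_length W
  have hup := dist_le (liftWalk p hp (hn k))
  simp only [Vert.level, length_liftWalk] at hlow hup
  omega

lemma exists_mid_of_step {f : ℕ → Vert V} (h0 : f 0 = .src) (hsnk : f n = .snk)
    (hstep : ∀ j < n, Step G a b n (f j) (f (j + 1))) :
    ∃ k, ∃ w : ℕ → V k, ∀ j, j + 1 < n → f (j + 1) = .mid k (w j) (j + 1) := by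
  have hn : n ≠ 0 := by
    rintro rfl
    rw [h0] at hsnk
    cases hsnk
  obtain ⟨k, hk⟩ := (h0 ▸ hstep 0 (by omega)).exists_eq_start
  have hmid : ∀ j, j + 1 < n → ∃ z : V k, f (j + 1) = .mid k z (j + 1) := by
    intro j hj
    induction j with
    | zero => exact ⟨a k, hk⟩
    | succ j ih =>
      obtain ⟨z, hz⟩ := ih (by omega)
      have h := hstep (j + 1) (by omega)
      rw [hz] at h
      refine h.eq_mid_or_eq_snk.resolve_right fun hsnk => ?_
      have := h.level_eq
      rw [hsnk] at this
      simp only [Vert.level] at this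
      omega
  choose w hw using fun j => (em (j + 1 < n)).elim
    (fun hj => (hmid j hj).imp fun _ h _ => h) (fun hj => ⟨a k, fun h => absurd h hj⟩)
  exact ⟨k, w, hw⟩

lemma exists_liftVert_eq_of_step (hn : ∀ k, (G k).dist (a k) (b k) + 2 ≤ n) {f : ℕ → Vert V}
    (h0 : f 0 = .src) (hsnk : f n = .snk) (hstep : ∀ j < n, Step G a b n (f j) (f (j + 1))) :
    ∃ k, ∃ p : Geodesic (G k) (a k) (b k), ∀ j ≤ n, f j = liftVert n k p.1 j := by
  obtain ⟨k, w, hw⟩ := exists_mid_of_step h0 hsnk hstep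
  set d := (G k).dist (a k) (b k)
  have hd := hn k
  have hw0 : w 0 = a k := by
    have h := hstep 0 (by omega)
    rw [h0, hw 0 (by omega)] at h
    exact h.eq_start
  have hmid : ∀ j, j + 2 < n →
      Step G a b n (.mid k (w j) (j + 1)) (.mid k (w (j + 1)) (j + 1 + 1)) := fun j hj => by
    simpa only [hw j (by omega), hw (j + 1) hj] using hstep (j + 1) (by omega)
  have hb : ∀ j, d ≤ j → j + 2 ≤ n → w j = b k := by
    intro j hdj hj
    rcases hj.lt_or_eq with hj | hj
    · exact ((hmid j hj).adj_or_pad.resolve_left fun h => by omega).2.1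
    · have h := hstep (j + 1) (by omega)
      rw [hw j (by omega), show j + 1 + 1 = n by omega, hsnk] at h
      exact h.eq_finish
  have hadj : ∀ j < d, (G k).Adj (w j) (w (j + 1)) := fun j hj =>
    ((hmid j (by omega)).adj_or_pad.resolve_right fun h => by omega).2
  let q := (Walk.ofSeq w d hadj).copy hw0 (hb d le_rfl hd)
  refine ⟨k, Geodesic.ofLengthEqDist q (by simp [q, d]), fun j hj => ?_⟩
  rcases j with _ | j
  · rw [liftVert_zero, h0]
  by_cases hj' : j + 1 < n
  · rw [liftVert_succ_of_lt _ hj', hw j hj']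
    simp only [Geodesic.ofLengthEqDist, q, Walk.getVert_copy, Walk.getVert_ofSeq]
    rcases le_total j d with hjd | hjd
    · rw [min_eq_left hjd]
    · rw [min_eq_right hjd, hb d le_rfl hd, hb j hjd (by omega)]
  · rw [liftVert_of_le _ (by omega) (by omega), show j + 1 = n by omega, hsnk]

lemma liftVert_eq_liftVert_iff {k : ι} (p q : Geodesic (G k) (a k) (b k))
    (hd : (G k).dist (a k) (b k) + 2 ≤ n) (j : ℕ) :
    liftVert n k p.1 j = liftVert n k q.1 j ↔ p.1.getVert (j - 1) = q.1.getVert (j - 1) := by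
  rcases j with _ | j
  · simp
  by_cases hj : j + 1 < n
  · simp [liftVert_succ_of_lt _ hj]
  · rw [liftVert_of_le _ (by omega) (by omega), liftVert_of_le _ (by omega) (by omega),
      Nat.add_sub_cancel, p.1.getVert_of_length_le (by rw [p.length_eq]; omega),
      q.1.getVert_of_length_le (by rw [q.length_eq]; omega)]
    exact iff_of_true rfl rfl

lemma liftVert_ne_of_ne {k k' : ι} (hk : k ≠ k') {H : SimpleGraph (V k)}
    {H' : SimpleGraph (V k')} {x y : V k} {x' y' : V k'} (p : H.Walk x y) (q : H'.Walk x' y')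
    {j : ℕ} (h0 : j ≠ 0) (hj : j < n) : liftVert n k p j ≠ liftVert n k' q j := by
  obtain ⟨j, rfl⟩ := Nat.exists_eq_succ_of_ne_zero h0
  simp [liftVert_succ_of_lt _ hj, hk]

section LiftGeodesic

variable (hn : ∀ k, (G k).dist (a k) (b k) + 2 ≤ n)

def lift (k : ι) (p : Geodesic (G k) (a k) (b k)) : Geodesic (graph G a b n) .src .snk :=
  Geodesic.ofLengthEqDist (liftWalk p.1 p.length_eq (hn k)) <| by
    rw [length_liftWalk, dist_src_snk hn ⟨liftWalk p.1 p.length_eq (hn k)⟩]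

@[simp]
lemma getVert_lift (k : ι) (p : Geodesic (G k) (a k) (b k)) (j : ℕ) :
    (lift hn k p).1.getVert j = liftVert n k p.1 j :=
  getVert_liftWalk p.1 p.length_eq (hn k) j

lemma exists_lift_eq (P : Geodesic (graph G a b n) .src .snk) : ∃ k p, lift hn k p = P := by
  have hP : P.1.length = n := P.length_eq.trans (dist_src_snk hn ⟨P.1⟩)
  obtain ⟨k, p, hp⟩ := exists_liftVert_eq_of_step hn P.1.getVert_zero
    (P.1.getVert_of_length_le hP.le)
    fun j hj => step_getVert_of_level_eq P.1 (by simp [Vert.level, hP]) (by omega)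
  refine ⟨k, p, Geodesic.ext fun j => ?_⟩
  rw [getVert_lift]
  rcases le_or_gt j n with hj | hj
  · exact (hp j hj).symm
  · rw [liftVert_of_le _ (by omega) hj.le, P.1.getVert_of_length_le (by omega)]

lemma lift_injective :
    Function.Injective fun P : Σ k, Geodesic (G k) (a k) (b k) => lift hn P.1 P.2 := by
  rintro ⟨k, p⟩ ⟨k', q⟩ h
  have hpos (j : ℕ) := congrArg (fun P => P.1.getVert j) h
  simp only [getVert_lift] at hpos
  obtain rfl : k = k' := by
    by_contra hk
    exact liftVert_ne_of_ne hk p.1 q.1 one_ne_zero (by have := hn k; omega) (hpos 1)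
  congr
  ext j
  simpa using (liftVert_eq_liftVert_iff p q (hn k) (j + 1)).1 (hpos (j + 1))

lemma lift_adj_lift_iff {k : ι} (p q : Geodesic (G k) (a k) (b k)) :
    (SPG (graph G a b n) .src .snk).Adj (lift hn k p) (lift hn k q) ↔
      (SPG (G k) (a k) (b k)).Adj p q := by
  simp only [spg_adj_iff_getVert, getVert_lift, ne_eq, liftVert_eq_liftVert_iff p q (hn k)]
  constructor
  · rintro ⟨i, hi, hj⟩
    have hi0 : i ≠ 0 := by rintro rfl; simp at hi
    exact ⟨i - 1, hi, fun j hji => by simpa using hj (j + 1) (by omega)⟩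
  · rintro ⟨i, hi, hj⟩
    refine ⟨i + 1, by simpa using hi, fun j hji => ?_⟩
    rcases j with _ | j
    · simp
    · simpa using hj j (by omega)

lemma not_adj_lift_of_ne (hn3 : 3 ≤ n) {k k' : ι} (hk : k ≠ k')
    (p : Geodesic (G k) (a k) (b k)) (q : Geodesic (G k') (a k') (b k')) :
    ¬(SPG (graph G a b n) .src .snk).Adj (lift hn k p) (lift hn k' q) := by
  rw [spg_adj_iff_getVert]
  rintro ⟨i, -, hj⟩
  simp only [getVert_lift] at hj
  rcases eq_or_ne i 1 with rfl | hi
  · exact liftVert_ne_of_ne hk p.1 q.1 two_ne_zero (by omega) (hj 2 (by omega))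
  · exact liftVert_ne_of_ne hk p.1 q.1 one_ne_zero (by omega) (hj 1 hi.symm)

noncomputable def iso (hn3 : 3 ≤ n) :
    SimpleGraph.sigma (fun k => SPG (G k) (a k) (b k)) ≃g SPG (graph G a b n) .src .snk where
  toEquiv := Equiv.ofBijective _ ⟨lift_injective hn, fun P =>
    let ⟨k, p, h⟩ := exists_lift_eq hn P
    ⟨⟨k, p⟩, h⟩⟩
  map_rel_iff' := by
    rintro ⟨k, p⟩ ⟨k', q⟩
    by_cases hk : k = k'
    · subst hk
      exact (lift_adj_lift_iff hn p q).trans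
        (sigma_adj_mk (H := fun k => SPG (G k) (a k) (b k))).symm
    · exact iff_of_false (not_adj_lift_of_ne hn hn3 hk p q)
        (sigma_not_adj_of_ne (H := fun k => SPG (G k) (a k) (b k)) hk p q)

end LiftGeodesic

end Parallel

theorem isSPGraph_sigma_spg {ι : Type} [Finite ι] {V : ι → Type} (G : ∀ k, SimpleGraph (V k))
    (a b : ∀ k, V k) : IsSPGraph (SimpleGraph.sigma fun k => SPG (G k) (a k) (b k)) := by
  obtain ⟨M, hM⟩ := Finite.bddAbove_range fun k => (G k).dist (a k) (b k)
  have hn k : (G k).dist (a k) (b k) + 2 ≤ M + 3 := by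
    have : (G k).dist (a k) (b k) ≤ M := hM ⟨k, rfl⟩
    omega
  exact ⟨_, Parallel.graph G a b (M + 3), .src, .snk, nofun, ⟨Parallel.iso hn (by omega)⟩⟩

theorem stmt5 {α β : Type*} (H₁ : SimpleGraph α) (H₂ : SimpleGraph β)
    (h₁ : IsSPGraph H₁) (h₂ : IsSPGraph H₂) : IsSPGraph (H₁ ⊕g H₂) := by
  obtain ⟨V₁, G₁, a₁, b₁, -, ⟨e₁⟩⟩ := h₁
  obtain ⟨V₂, G₂, a₂, b₂, -, ⟨e₂⟩⟩ := h₂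
  let V (k : Bool) : Type := Bool.rec V₁ V₂ k
  let G (k : Bool) : SimpleGraph (V k) := Bool.rec G₁ G₂ k
  let a (k : Bool) : V k := Bool.rec a₁ a₂ k
  let b (k : Bool) : V k := Bool.rec b₁ b₂ k
  exact (isSPGraph_sigma_spg G a b).of_iso
    ((e₁.sumCongr e₂).trans (Iso.sumSigmaBool fun k => SPG (G k) (a k) (b k)))
end

section
/- Let H = S(G,a,b) be a shortest path graph, let i be fixed with 1 ≤ i < d(a,b), let v_{i_1},…,v_{i_k} be the vertices of G at distance i from a that lie on some a,b-geodesic, and let E_i be the set of edges of H whose difference index is i. Then H minus the edges E_i is the disjoint union over j of the subgraphs induced by the geodesics through v_{i_j}, each isomorphic to S(G,a,v_{i_j}) □ S(G,v_{i_j},b); moreover for any two such components, the edges of E_i between them form a partial matching. -/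
/-!
If d(a,v) + d(v,b) = d(a,b), the a,b-geodesics with vertex v at index d(a,v) are exactly the
concatenations of an a,v-geodesic with a v,b-geodesic, and the vertex sequence of such a
concatenation is the two sequences glued at v. Two concatenations whose prefixes have equal length
differ in exactly one position iff one pair of factors does and the other pair is equal: this is
adjacency in the Cartesian product. Edges of index ≠ i keep the vertex at index i, and edges
between geodesics sharing that vertex never have index i. An Eᵢ-neighbour of U agrees with U
off index i, so it is determined by its vertex at index i, which gives the matching.
-/

open SimpleGraph

/-- The shortest path graph with all edges of difference index `i` deleted. -/
def SPGMinus {V : Type*} (G : SimpleGraph V) (a b : V) (i : ℕ) :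
    SimpleGraph (Geodesic G a b) where
  Adj U W := (SPG G a b).Adj U W ∧ ¬ DiffAt U W i
  symm := by
    constructor
    rintro U W ⟨h1, h2⟩
    exact ⟨h1.symm, fun hd => h2 ⟨hd.1.symm, fun j hj => (hd.2 j hj).symm⟩⟩
  loopless := by
    constructor
    intro U h
    exact (SPG G a b).irrefl h.1

namespace List
variable {α : Type*}

-- Compared through `getElem?`, so that, unlike `getD` in `DiffAt`, no default value enters.
def DiffersExactlyAt (l₁ l₂ : List α) (j : ℕ) : Prop :=
  l₁[j]? ≠ l₂[j]? ∧ ∀ k ≠ j, l₁[k]? = l₂[k]?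

theorem getD_eq_getD_iff {l₁ l₂ : List α} (h : l₁.length = l₂.length) (k : ℕ) (c : α) :
    l₁.getD k c = l₂.getD k c ↔ l₁[k]? = l₂[k]? := by
  rw [getD_eq_getElem?_getD, getD_eq_getElem?_getD]
  by_cases hk : k < l₁.length
  · simp [getElem?_eq_getElem hk, getElem?_eq_getElem (h ▸ hk)]
  · simp [getElem?_eq_none (not_lt.1 hk), getElem?_eq_none (h ▸ not_lt.1 hk)]

theorem getElem?_eq_getElem?_of_length_le {l₁ l₂ : List α} (h : l₁.length = l₂.length) {k : ℕ}
    (hk : l₁.length ≤ k) : l₁[k]? = l₂[k]? := by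
  rw [getElem?_eq_none hk, getElem?_eq_none (h ▸ hk)]

theorem eq_iff_forall_lt_length {l₁ l₂ : List α} (h : l₁.length = l₂.length) :
    l₁ = l₂ ↔ ∀ k < l₁.length, l₁[k]? = l₂[k]? :=
  ⟨fun he _ _ => he ▸ rfl, fun he => ext_getElem? fun k =>
    if hk : k < l₁.length then he k hk else getElem?_eq_getElem?_of_length_le h (not_lt.1 hk)⟩

theorem not_differsExactlyAt_self (l : List α) (j : ℕ) : ¬ DiffersExactlyAt l l j :=
  fun h => h.1 rfl

theorem DiffersExactlyAt.lt_length {l₁ l₂ : List α} {j : ℕ} (hd : DiffersExactlyAt l₁ l₂ j)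
    (h : l₁.length = l₂.length) : j < l₁.length := by
  by_contra! hj
  exact hd.1 (getElem?_eq_getElem?_of_length_le h hj)

theorem getElem?_append_eq_iff_of_lt {l₁ l₂ m₁ m₂ : List α} (h : l₁.length = l₂.length)
    {k : ℕ} (hk : k < l₁.length) : (l₁ ++ m₁)[k]? = (l₂ ++ m₂)[k]? ↔ l₁[k]? = l₂[k]? := by
  rw [getElem?_append_left hk, getElem?_append_left (h ▸ hk)]

theorem getElem?_append_add_eq_iff {l₁ l₂ m₁ m₂ : List α} (h : l₁.length = l₂.length) (k : ℕ) :
    (l₁ ++ m₁)[l₁.length + k]? = (l₂ ++ m₂)[l₁.length + k]? ↔ m₁[k]? = m₂[k]? := by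
  rw [getElem?_append_right (by omega), getElem?_append_right (by omega), h,
    Nat.add_sub_cancel_left]

theorem differsExactlyAt_append_of_lt {l₁ l₂ m₁ m₂ : List α} (h : l₁.length = l₂.length)
    {j : ℕ} (hj : j < l₁.length) :
    DiffersExactlyAt (l₁ ++ m₁) (l₂ ++ m₂) j ↔ DiffersExactlyAt l₁ l₂ j ∧ m₁ = m₂ := by
  have hjeq := (getElem?_append_eq_iff_of_lt (m₁ := m₁) (m₂ := m₂) h hj).not
  constructor
  · rintro ⟨hne, hk⟩
    refine ⟨⟨hjeq.1 hne, fun k hkj => ?_⟩, ext_getElem? fun k => ?_⟩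
    · rcases lt_or_ge k l₁.length with hkl | hkl
      · exact (getElem?_append_eq_iff_of_lt h hkl).1 (hk k hkj)
      · exact getElem?_eq_getElem?_of_length_le h hkl
    · exact (getElem?_append_add_eq_iff h k).1 (hk _ (by omega))
  · rintro ⟨⟨hne, hk⟩, rfl⟩
    refine ⟨hjeq.2 hne, fun k hkj => ?_⟩
    rcases lt_or_ge k l₁.length with hkl | hkl
    · exact (getElem?_append_eq_iff_of_lt h hkl).2 (hk k hkj)
    · obtain ⟨k, rfl⟩ := Nat.exists_eq_add_of_le hkl
      exact (getElem?_append_add_eq_iff h k).2 rfl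

theorem differsExactlyAt_append_add {l₁ l₂ m₁ m₂ : List α} (h : l₁.length = l₂.length) (j : ℕ) :
    DiffersExactlyAt (l₁ ++ m₁) (l₂ ++ m₂) (l₁.length + j) ↔
      DiffersExactlyAt m₁ m₂ j ∧ l₁ = l₂ := by
  have hjeq := (getElem?_append_add_eq_iff (m₁ := m₁) (m₂ := m₂) h j).not
  rw [eq_iff_forall_lt_length h]
  constructor
  · rintro ⟨hne, hk⟩
    refine ⟨⟨hjeq.1 hne, fun k hkj => ?_⟩, fun k hkl => ?_⟩
    · exact (getElem?_append_add_eq_iff h k).1 (hk _ (by omega))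
    · exact (getElem?_append_eq_iff_of_lt h hkl).1 (hk k (by omega))
  · rintro ⟨⟨hne, hk⟩, hl⟩
    refine ⟨hjeq.2 hne, fun k hkj => ?_⟩
    rcases lt_or_ge k l₁.length with hkl | hkl
    · exact (getElem?_append_eq_iff_of_lt h hkl).2 (hl k hkl)
    · obtain ⟨k, rfl⟩ := Nat.exists_eq_add_of_le hkl
      exact (getElem?_append_add_eq_iff h k).2 (hk k (by omega))

theorem exists_differsExactlyAt_append_iff {l₁ l₂ m₁ m₂ : List α} (h : l₁.length = l₂.length) :
    (∃ j, DiffersExactlyAt (l₁ ++ m₁) (l₂ ++ m₂) j) ↔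
      (∃ j, DiffersExactlyAt l₁ l₂ j) ∧ m₁ = m₂ ∨ (∃ j, DiffersExactlyAt m₁ m₂ j) ∧ l₁ = l₂ := by
  constructor
  · rintro ⟨j, hd⟩
    rcases lt_or_ge j l₁.length with hj | hj
    · exact .inl (((differsExactlyAt_append_of_lt h hj).1 hd).imp_left (⟨j, ·⟩))
    · obtain ⟨j, rfl⟩ := Nat.exists_eq_add_of_le hj
      exact .inr (((differsExactlyAt_append_add h j).1 hd).imp_left (⟨j, ·⟩))
  · rintro (⟨⟨j, hd⟩, hm⟩ | ⟨⟨j, hd⟩, hl⟩)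
    · exact ⟨j, (differsExactlyAt_append_of_lt h (hd.lt_length h)).2 ⟨hd, hm⟩⟩
    · exact ⟨_, (differsExactlyAt_append_add h j).2 ⟨hd, hl⟩⟩

theorem exists_differsExactlyAt_cons_iff {l₁ l₂ : List α} (x : α) :
    (∃ j, DiffersExactlyAt (x :: l₁) (x :: l₂) j) ↔ ∃ j, DiffersExactlyAt l₁ l₂ j := by
  simpa [not_differsExactlyAt_self] using
    exists_differsExactlyAt_append_iff (l₁ := [x]) (l₂ := [x]) (m₁ := l₁) (m₂ := l₂) rfl

end List

namespace SimpleGraph.Walk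

variable {V : Type*} {G : SimpleGraph V}

theorem length_eq_dist_of_append {u v w : V} (p : G.Walk u v) (q : G.Walk v w)
    (h : (p.append q).length = G.dist u w) : p.length = G.dist u v ∧ q.length = G.dist v w := by
  have hp := G.dist_le p
  have hq := G.dist_le q
  have htri := p.reachable.dist_triangle_left w
  rw [Walk.length_append] at h
  omega

theorem getD_support_of_length_eq {u w : V} (p : G.Walk u w) {n : ℕ}
    (hn : p.length = n) (c : V) : p.support.getD n c = w := by
  subst hn
  rw [List.getD_eq_getElem _ _ (by rw [Walk.length_support]; omega), Walk.support_getElem_length]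

theorem getD_support_eq_getVert {u w : V} (p : G.Walk u w) {n : ℕ}
    (hn : n ≤ p.length) (c : V) : p.support.getD n c = p.getVert n := by
  rw [List.getD_eq_getElem?_getD, ← p.getVert_eq_support_getElem? hn, Option.getD_some]

def toGeodesic {a b : V} (p : G.Walk a b) (h : p.length = G.dist a b) : Geodesic G a b :=
  ⟨p, p.isPath_of_length_eq_dist h, h⟩

end SimpleGraph.Walk

namespace Geodesic

variable {V : Type*} {G : SimpleGraph V} {a b v : V}

theorem ext_support {U W : Geodesic G a b} (h : U.1.support = W.1.support) : U = W :=
  Subtype.ext (Walk.ext_support h)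

theorem length_support (U : Geodesic G a b) : U.1.support.length = G.dist a b + 1 := by
  rw [Walk.length_support, U.2.2]

theorem diffAt_iff (U W : Geodesic G a b) (j : ℕ) :
    DiffAt U W j ↔ U.1.support.DiffersExactlyAt W.1.support j := by
  have h := U.length_support.trans W.length_support.symm
  simp only [DiffAt, List.DiffersExactlyAt, ne_eq, List.getD_eq_getD_iff h]

theorem eq_of_diffAt_of_diffAt {U W W' : Geodesic G a b} {i : ℕ} (hW : DiffAt U W i)
    (hW' : DiffAt U W' i) (hi : W.1.support.getD i a = W'.1.support.getD i a) : W = W' := by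
  refine ext_support (List.ext_getElem? fun k => ?_)
  rw [← List.getD_eq_getD_iff (W.length_support.trans W'.length_support.symm) k a]
  by_cases hk : k = i
  · exact hk ▸ hi
  · exact (hW.2 k hk).symm.trans (hW'.2 k hk)

def append (p : Geodesic G a v) (q : Geodesic G v b)
    (h : G.dist a v + G.dist v b = G.dist a b) : Geodesic G a b :=
  (p.1.append q.1).toGeodesic (by rw [Walk.length_append, p.2.2, q.2.2, h])

theorem support_append (p : Geodesic G a v) (q : Geodesic G v b)
    (h : G.dist a v + G.dist v b = G.dist a b) :
    (p.append q h).1.support = p.1.support ++ q.1.support.tail :=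
  Walk.support_append p.1 q.1

theorem getD_support_append (p : Geodesic G a v) (q : Geodesic G v b)
    (h : G.dist a v + G.dist v b = G.dist a b) :
    (p.append q h).1.support.getD (G.dist a v) a = v := by
  rw [support_append, List.getD_append _ _ _ _ (by rw [p.length_support]; omega)]
  exact p.1.getD_support_of_length_eq p.2.2 a

theorem append_injective (h : G.dist a v + G.dist v b = G.dist a b) :
    Function.Injective fun x : Geodesic G a v × Geodesic G v b => x.1.append x.2 h := by
  rintro ⟨p, q⟩ ⟨p', q'⟩ he
  have hs := congrArg (fun U : Geodesic G a b => U.1.support) he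
  simp only [support_append] at hs
  obtain ⟨hp, hq⟩ := List.append_inj hs (p.length_support.trans p'.length_support.symm)
  refine Prod.ext (ext_support hp) (ext_support ?_)
  rw [← q.1.cons_tail_support, ← q'.1.cons_tail_support, hq]

theorem dist_getD_support (U : Geodesic G a b) {i : ℕ} (hi : i ≤ G.dist a b) :
    G.dist a (U.1.support.getD i a) = i ∧
      G.dist a (U.1.support.getD i a) + G.dist (U.1.support.getD i a) b = G.dist a b := by
  rw [U.1.getD_support_eq_getVert (U.2.2.symm ▸ hi)]
  obtain ⟨hp, hq⟩ := (U.1.take i).length_eq_dist_of_append (U.1.drop i)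
    (by rw [Walk.append_take_drop_eq]; exact U.2.2)
  rw [Walk.take_length, U.2.2] at hp
  rw [Walk.drop_length, U.2.2] at hq
  omega

theorem exists_eq_append (h : G.dist a v + G.dist v b = G.dist a b) (U : Geodesic G a b)
    (hU : U.1.support.getD (G.dist a v) a = v) :
    ∃ (p : Geodesic G a v) (q : Geodesic G v b), p.append q h = U := by
  have hn : G.dist a v ≤ U.1.length := by rw [U.2.2]; omega
  have hv : U.1.getVert (G.dist a v) = v := (U.1.getD_support_eq_getVert hn a).symm.trans hU
  set p := (U.1.take (G.dist a v)).copy rfl hv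
  set q := (U.1.drop (G.dist a v)).copy hv rfl
  have hpq : p.append q = U.1 := by
    rw [Walk.append_copy_copy, Walk.append_take_drop_eq, Walk.copy_rfl_rfl]
  obtain ⟨hp, hq⟩ := p.length_eq_dist_of_append q (by rw [hpq]; exact U.2.2)
  exact ⟨p.toGeodesic hp, q.toGeodesic hq, Subtype.ext hpq⟩

noncomputable def appendEquiv (h : G.dist a v + G.dist v b = G.dist a b) :
    Geodesic G a v × Geodesic G v b ≃
      {U : Geodesic G a b | U.1.support.getD (G.dist a v) a = v} :=
  Equiv.ofBijective (fun x => ⟨x.1.append x.2 h, getD_support_append x.1 x.2 h⟩)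
    ⟨fun _ _ hxy => append_injective h (congrArg Subtype.val hxy),
      fun ⟨U, hU⟩ =>
        let ⟨p, q, hpq⟩ := exists_eq_append h U hU
        ⟨(p, q), Subtype.ext hpq⟩⟩

end Geodesic

section ShortestPathGraph

variable {V : Type*} {G : SimpleGraph V} {a b v : V}

theorem spg_adj_iff (U W : Geodesic G a b) :
    (SPG G a b).Adj U W ↔ ∃ j, U.1.support.DiffersExactlyAt W.1.support j :=
  exists_congr (Geodesic.diffAt_iff U W)

theorem spg_adj_append_iff (h : G.dist a v + G.dist v b = G.dist a b)
    (p p' : Geodesic G a v) (q q' : Geodesic G v b) :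
    (SPG G a b).Adj (p.append q h) (p'.append q' h) ↔
      (SPG G a v).Adj p p' ∧ q = q' ∨ (SPG G v b).Adj q q' ∧ p = p' := by
  have eq_iff_tail : ∀ r r' : Geodesic G v b, r = r' ↔ r.1.support.tail = r'.1.support.tail :=
    fun r r' => ⟨(· ▸ rfl), fun ht => Geodesic.ext_support (by
      rw [← r.1.cons_tail_support, ← r'.1.cons_tail_support, ht])⟩
  rw [spg_adj_iff, spg_adj_iff, spg_adj_iff, Geodesic.support_append, Geodesic.support_append,
    List.exists_differsExactlyAt_append_iff (p.length_support.trans p'.length_support.symm),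
    eq_iff_tail, ← q.1.cons_tail_support, ← q'.1.cons_tail_support,
    List.exists_differsExactlyAt_cons_iff, List.tail_cons, List.tail_cons]
  exact or_congr Iff.rfl (and_congr Iff.rfl ⟨Geodesic.ext_support, (· ▸ rfl)⟩)

theorem spgMinus_adj_getD_eq {i : ℕ} {U W : Geodesic G a b} (h : (SPGMinus G a b i).Adj U W) :
    U.1.support.getD i a = W.1.support.getD i a := by
  obtain ⟨⟨j, hd⟩, hni⟩ := h
  exact hd.2 i fun hij => hni (hij ▸ hd)

theorem induce_spgMinus_eq (i : ℕ) (v : V) :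
    (SPGMinus G a b i).induce {U : Geodesic G a b | U.1.support.getD i a = v} =
      (SPG G a b).induce {U : Geodesic G a b | U.1.support.getD i a = v} := by
  ext U W
  exact and_iff_left fun hd => hd.1 (U.2.trans W.2.symm)

noncomputable def boxProdIsoInduce {i : ℕ} (h : G.dist a v + G.dist v b = G.dist a b)
    (hi : G.dist a v = i) :
    (SPG G a v □ SPG G v b) ≃g
      (SPG G a b).induce {U : Geodesic G a b | U.1.support.getD i a = v} := by
  subst hi
  exact ⟨Geodesic.appendEquiv h, fun {x y} =>
    (spg_adj_append_iff h x.1 y.1 x.2 y.2).trans boxProd_adj.symm⟩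

end ShortestPathGraph

theorem stmt10_general {V : Type*} (G : SimpleGraph V) (a b : V)
    (i : ℕ) (hi2 : i < G.dist a b) :
    -- (a) no edge of H ∖ Eᵢ joins geodesics passing through different vertices at index i,
    (∀ U W : Geodesic G a b, (SPGMinus G a b i).Adj U W →
        U.1.support.getD i a = W.1.support.getD i a) ∧
    -- so H ∖ Eᵢ is the disjoint union of the parts D_v; each part is a Cartesian product:
    (∀ v : V, (∃ U : Geodesic G a b, U.1.support.getD i a = v) →
        Nonempty (((SPGMinus G a b i).induce
            {U : Geodesic G a b | U.1.support.getD i a = v}) ≃g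
          (SPG G a v □ SPG G v b))) ∧
    -- (b) the Eᵢ-edges between two distinct parts form a partial matching:
    (∀ U W W' : Geodesic G a b,
        U.1.support.getD i a ≠ W.1.support.getD i a →
        W.1.support.getD i a = W'.1.support.getD i a →
        (SPG G a b).Adj U W → (SPG G a b).Adj U W' →
        DiffAt U W i → DiffAt U W' i → W = W') := by
  refine ⟨fun _ _ => spgMinus_adj_getD_eq, ?_,
    fun _ _ _ _ hWW' _ _ hW hW' => Geodesic.eq_of_diffAt_of_diffAt hW hW' hWW'⟩
  rintro v ⟨U, rfl⟩
  obtain ⟨hi, hsplit⟩ := U.dist_getD_support hi2.le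
  rw [induce_spgMinus_eq]
  exact ⟨(boxProdIsoInduce hsplit hi).symm⟩

theorem stmt10 {V : Type*} (G : SimpleGraph V) (a b : V) (hab : a ≠ b)
    (i : ℕ) (hi1 : 1 ≤ i) (hi2 : i < G.dist a b) :
    -- (a) no edge of H ∖ Eᵢ joins geodesics passing through different vertices at index i,
    (∀ U W : Geodesic G a b, (SPGMinus G a b i).Adj U W →
        U.1.support.getD i a = W.1.support.getD i a) ∧
    -- so H ∖ Eᵢ is the disjoint union of the parts D_v; each part is a Cartesian product:
    (∀ v : V, (∃ U : Geodesic G a b, U.1.support.getD i a = v) →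
        Nonempty (((SPGMinus G a b i).induce
            {U : Geodesic G a b | U.1.support.getD i a = v}) ≃g
          (SPG G a v □ SPG G v b))) ∧
    -- (b) the Eᵢ-edges between two distinct parts form a partial matching:
    (∀ U W W' : Geodesic G a b,
        U.1.support.getD i a ≠ W.1.support.getD i a →
        W.1.support.getD i a = W'.1.support.getD i a →
        (SPG G a b).Adj U W → (SPG G a b).Adj U W' →
        DiffAt U W i → DiffAt U W' i → W = W') :=
  stmt10_general G a b i hi2
end
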